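/- arXiv:1806.08762 — 4 statements merged into one kernel-verified Lean document; each statement's English description precedes it below -/
import Mathlib

section
/- If n is an odd composite number, then the set of integers a with 1 ≤ a ≤ n-1 for which the Solovay-Strassen predicate W(a, n) fails (i.e., gcd(a,n)=1 and a^((n-1)/2) ≡ (a/n) mod n) forms a proper subgroup of (ℤ/nℤ)^× when restricted to units, and hence at least half of the integers in [1, n-1] satisfy W(a, n). -/
/-!
The units `u` with `u ^ ((n - 1) / 2) = (u / n)` are the equalizer of two homomorphisms
`(ZMod n)ˣ →* ZMod n`, hence a subgroup. For odd composite `n` it is proper. If `p ^ 2 ∣ n`,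
then `1 + n / p` is a unit whose `(n - 1)`-th power is `1 - n / p ≠ 1`, while every member
satisfies `u ^ (n - 1) = (u / n) ^ 2 = 1`. Otherwise `n = p * m` with `p ∤ m` and `m > 2`, and a
residue that is a non-square mod `p` and `≡ 1 mod m` has Jacobi symbol `-1` but
`u ^ ((n - 1) / 2) ≡ 1 mod m`. A proper subgroup has at most `φ(n) / 2 ≤ (n - 1) / 2`
elements, and the non-witnesses in `[1, n - 1]` inject into it.
-/

/-- The Solovay-Strassen witness predicate. -/
def SSWitness (a n : ℕ) : Prop :=
  1 < Nat.gcd a n ∨ ¬ ((a : ℤ) ^ ((n - 1) / 2) ≡ jacobiSym (a : ℤ) n [ZMOD (n : ℤ)])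

lemma one_add_pow_of_sq_eq_zero {R : Type*} [CommRing R] {x : R} (hx : x ^ 2 = 0) (k : ℕ) :
    (1 + x) ^ k = 1 + k * x := by
  induction k with
  | zero => simp
  | succ k ih =>
    rw [pow_succ, ih]
    push_cast
    linear_combination (k : R) * hx

lemma Subgroup.two_mul_card_le_card_of_ne_top {G : Type*} [Group G] [Finite G] {H : Subgroup G}
    (hH : H ≠ ⊤) : 2 * Nat.card H ≤ Nat.card G := by
  have h2 : 2 ≤ H.index := by
    have := H.index_ne_zero_of_finite
    have := mt Subgroup.index_eq_one.mp hH
    omega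
  calc 2 * Nat.card H ≤ H.index * Nat.card H := Nat.mul_le_mul_right _ h2
    _ = Nat.card G := by rw [mul_comm, H.card_mul_index]

lemma exists_jacobiSym_mul_eq_neg_one_and_modEq_one {p m : ℕ} (hp : p.Prime) (hp2 : p ≠ 2)
    (hpm : p.Coprime m) : ∃ k : ℕ, jacobiSym k (p * m) = -1 ∧ k ≡ 1 [MOD m] := by
  have : Fact p.Prime := ⟨hp⟩
  obtain ⟨b, hb⟩ := FiniteField.exists_nonsquare (F := ZMod p) (by rwa [ZMod.ringChar_zmod_n])
  obtain ⟨k, hkp, hkm⟩ := Nat.chineseRemainder hpm b.val 1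
  have hm : m ≠ 0 := by
    rintro rfl
    exact hp.one_lt.ne' (Nat.coprime_zero_right p |>.mp hpm)
  refine ⟨k, ?_, hkm⟩
  have hJp : jacobiSym k p = -1 := by
    rw [← jacobiSym.legendreSym.to_jacobiSym, legendreSym.eq_neg_one_iff, Int.cast_natCast,
      (ZMod.natCast_eq_natCast_iff _ _ _).mpr hkp, ZMod.natCast_zmod_val]
    exact hb
  have hJm : jacobiSym k m = 1 := by
    rw [jacobiSym.mod_left' (b := m) (a₂ := 1) (by exact_mod_cast hkm), jacobiSym.one_left]
  rw [jacobiSym.mul_right' _ hp.ne_zero hm, hJp, hJm, mul_one]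

lemma ncard_Icc_sep_add_ncard_Icc_sep_not (N : ℕ) (P : ℕ → Prop) :
    {a | 1 ≤ a ∧ a ≤ N ∧ P a}.ncard + {a | 1 ≤ a ∧ a ≤ N ∧ ¬ P a}.ncard = N := by
  have := Set.ncard_inter_add_ncard_sdiff_eq_ncard (Set.Icc 1 N) {a | P a} (Set.finite_Icc 1 N)
  rw [Set.ncard_Icc_nat, Nat.add_sub_cancel] at this
  convert this using 3 <;> ext a <;> simp [and_assoc]

namespace ZMod

def jacobiSymHom (n : ℕ) : ZMod n →* ℤ where
  toFun x := jacobiSym x.val n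
  map_one' := by
    rw [val_one_eq_one_mod, Int.natCast_mod, Nat.cast_one, ← jacobiSym.mod_left,
      jacobiSym.one_left]
  map_mul' x y := by
    rw [val_mul, Int.natCast_mod, ← jacobiSym.mod_left, Nat.cast_mul, jacobiSym.mul_left]

lemma jacobiSymHom_apply (n : ℕ) (x : ZMod n) : jacobiSymHom n x = jacobiSym x.val n := rfl

lemma jacobiSymHom_unit_eq_one_or_neg_one (n : ℕ) (u : (ZMod n)ˣ) :
    jacobiSymHom n u = 1 ∨ jacobiSymHom n u = -1 :=
  jacobiSym.eq_one_or_neg_one (by rw [Int.gcd_natCast_natCast]; exact val_coe_unit_coprime u)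

def eulerJacobiSubgroup (n : ℕ) : Subgroup (ZMod n)ˣ :=
  MonoidHom.eqLocus ((Units.coeHom (ZMod n)).comp (powMonoidHom ((n - 1) / 2)))
    ((Int.castRingHom (ZMod n)).toMonoidHom.comp ((jacobiSymHom n).comp (Units.coeHom _)))

lemma mem_eulerJacobiSubgroup {n : ℕ} {u : (ZMod n)ˣ} :
    u ∈ eulerJacobiSubgroup n ↔
      (u : ZMod n) ^ ((n - 1) / 2) = ((jacobiSym ((u : ZMod n).val : ℤ) n : ℤ) : ZMod n) :=
  Iff.rfl

lemma pow_sub_one_eq_one_of_mem_eulerJacobiSubgroup {n : ℕ} (hn : Odd n) {u : (ZMod n)ˣ}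
    (hu : u ∈ eulerJacobiSubgroup n) : (u : ZMod n) ^ (n - 1) = 1 := by
  obtain ⟨k, rfl⟩ := hn
  have hJ := jacobiSymHom_unit_eq_one_or_neg_one (2 * k + 1) u
  rw [mem_eulerJacobiSubgroup, ← jacobiSymHom_apply] at hu
  rw [show 2 * k + 1 - 1 = (2 * k + 1 - 1) / 2 * 2 by omega, pow_mul, hu]
  rcases hJ with h | h <;> simp [h]

lemma exists_unit_pow_sub_one_ne_one_of_sq_dvd {n p : ℕ} (hn : n ≠ 0) (hp : p.Prime)
    (hpn : p ^ 2 ∣ n) : ∃ u : (ZMod n)ˣ, (u : ZMod n) ^ (n - 1) ≠ 1 := by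
  obtain ⟨k, rfl⟩ := hpn
  have hk : 0 < k := Nat.pos_of_ne_zero (right_ne_zero_of_mul hn)
  set x : ZMod (p ^ 2 * k) := ((p * k : ℕ) : ZMod (p ^ 2 * k))
  have hx : x ^ 2 = 0 := by
    rw [← Nat.cast_pow, natCast_eq_zero_iff]
    exact ⟨k, by ring⟩
  have hx0 : x ≠ 0 := by
    rw [Ne, natCast_eq_zero_iff]
    refine Nat.not_dvd_of_pos_of_lt (Nat.mul_pos hp.pos hk) ?_
    calc p * k < p * k * p := lt_mul_of_one_lt_right (Nat.mul_pos hp.pos hk) hp.one_lt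
      _ = p ^ 2 * k := by ring
  refine ⟨(IsNilpotent.isUnit_one_add ⟨2, hx⟩).unit, fun h => hx0 ?_⟩
  rw [IsUnit.unit_spec, one_add_pow_of_sq_eq_zero hx, Nat.cast_sub (by omega),
    natCast_self] at h
  linear_combination -h

lemma exists_notMem_eulerJacobiSubgroup_of_coprime {p m : ℕ} (hp : p.Prime) (hp2 : p ≠ 2)
    (hpm : p.Coprime m) (hm : 2 < m) : ∃ u, u ∉ eulerJacobiSubgroup (p * m) := by
  obtain ⟨k, hJ, hkm⟩ := exists_jacobiSym_mul_eq_neg_one_and_modEq_one hp hp2 hpm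
  have : NeZero (p * m) := ⟨Nat.mul_ne_zero hp.ne_zero (by omega)⟩
  have : Fact (2 < m) := ⟨hm⟩
  have hk : k.Coprime (p * m) := by
    have := (jacobiSym.eq_zero_iff_not_coprime (a := k) (b := p * m)).not.mp (by rw [hJ]; decide)
    rwa [Int.gcd_natCast_natCast, not_not] at this
  refine ⟨unitOfCoprime k hk, fun hu => neg_one_ne_one (n := m) ?_⟩
  rw [mem_eulerJacobiSubgroup, coe_unitOfCoprime, val_natCast, Int.natCast_mod,
    ← jacobiSym.mod_left, hJ] at hu
  have := congrArg (castHom (dvd_mul_left m p) (ZMod m)) hu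
  rwa [map_pow, map_natCast, (natCast_eq_natCast_iff _ _ _).mpr hkm, Nat.cast_one, one_pow,
    Int.cast_neg, Int.cast_one, map_neg, map_one, eq_comm] at this

lemma two_mul_card_le_sub_one_of_ne_top {n : ℕ} (h1 : 1 < n) {H : Subgroup (ZMod n)ˣ}
    (hH : H ≠ ⊤) : 2 * Nat.card H ≤ n - 1 := by
  have : NeZero n := ⟨by omega⟩
  have := Subgroup.two_mul_card_le_card_of_ne_top hH
  rw [Nat.card_eq_fintype_card (α := (ZMod n)ˣ), card_units_eq_totient] at this
  have := Nat.totient_lt n h1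
  omega

lemma eulerJacobiSubgroup_ne_top {n : ℕ} (hodd : Odd n) (h1 : 1 < n) (hcomp : ¬ n.Prime) :
    eulerJacobiSubgroup n ≠ ⊤ := by
  obtain ⟨p, hp, m, rfl⟩ := Nat.exists_prime_and_dvd h1.ne'
  by_cases hpm : p ∣ m
  · obtain ⟨u, hu⟩ := exists_unit_pow_sub_one_ne_one_of_sq_dvd (by omega : p * m ≠ 0) hp
      (by rw [sq]; exact mul_dvd_mul_left p hpm)
    exact fun htop => hu (pow_sub_one_eq_one_of_mem_eulerJacobiSubgroup hodd
      ((Subgroup.eq_top_iff' _).mp htop u))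
  · have hp2 : p ≠ 2 := by
      rintro rfl
      exact Nat.not_even_iff_odd.mpr hodd (even_two_mul m)
    have hm : 2 < m := by
      have hm1 : m ≠ 1 := by rintro rfl; exact hcomp (by rwa [mul_one])
      obtain ⟨j, rfl⟩ := Nat.Odd.of_mul_right hodd
      omega
    obtain ⟨u, hu⟩ := exists_notMem_eulerJacobiSubgroup_of_coprime hp hp2
      (hp.coprime_iff_not_dvd.mpr hpm) hm
    exact fun htop => hu ((Subgroup.eq_top_iff' _).mp htop u)

lemma exists_mem_eulerJacobiSubgroup_of_not_sSWitness {n a : ℕ} (ha : 0 < a)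
    (h : ¬ SSWitness a n) : ∃ u ∈ eulerJacobiSubgroup n, (u : ZMod n) = a := by
  simp only [SSWitness, not_or, not_lt, not_not] at h
  obtain ⟨hgcd, hcong⟩ := h
  have hco : a.Coprime n := by
    have := Nat.gcd_pos_of_pos_left n ha
    unfold Nat.Coprime
    omega
  refine ⟨unitOfCoprime a hco, ?_, coe_unitOfCoprime a hco⟩
  rw [mem_eulerJacobiSubgroup, coe_unitOfCoprime, val_natCast, Int.natCast_mod,
    ← jacobiSym.mod_left]
  exact_mod_cast (intCast_eq_intCast_iff _ _ _).mpr hcong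

lemma ncard_not_sSWitness_le_card_eulerJacobiSubgroup (n : ℕ) :
    {a : ℕ | 1 ≤ a ∧ a ≤ n - 1 ∧ ¬ SSWitness a n}.ncard ≤ Nat.card (eulerJacobiSubgroup n) := by
  calc {a : ℕ | 1 ≤ a ∧ a ≤ n - 1 ∧ ¬ SSWitness a n}.ncard
      ≤ (Units.val '' (eulerJacobiSubgroup n : Set (ZMod n)ˣ)).ncard := by
        refine Set.ncard_le_ncard_of_injOn (fun a : ℕ => (a : ZMod n)) ?_ ?_ (Set.toFinite _)
        · exact fun a ⟨ha, _, hw⟩ => exists_mem_eulerJacobiSubgroup_of_not_sSWitness ha hw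
        · intro a ⟨_, ha, _⟩ b ⟨_, hb, _⟩ hab
          rw [← val_cast_of_lt (show a < n by omega), ← val_cast_of_lt (show b < n by omega)]
          exact congrArg val hab
    _ = Nat.card (eulerJacobiSubgroup n) := by
        rw [Set.ncard_image_of_injective _ Units.val_injective, ← Nat.card_coe_set_eq]; rfl

end ZMod

theorem stmt9 (n : ℕ) (hodd : Odd n) (h1 : 1 < n) (hcomp : ¬ n.Prime) :
    (∃ H : Subgroup (ZMod n)ˣ, H ≠ ⊤ ∧
      ∀ u : (ZMod n)ˣ, u ∈ H ↔
        ((u : ZMod n) ^ ((n - 1) / 2) =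
          ((jacobiSym (((u : ZMod n).val : ℤ)) n : ℤ) : ZMod n))) ∧
    n - 1 ≤ 2 * Set.ncard {a : ℕ | 1 ≤ a ∧ a ≤ n - 1 ∧ SSWitness a n} := by
  have hE := ZMod.eulerJacobiSubgroup_ne_top hodd h1 hcomp
  refine ⟨⟨_, hE, fun _ => ZMod.mem_eulerJacobiSubgroup⟩, ?_⟩
  have hsplit := ncard_Icc_sep_add_ncard_Icc_sep_not (n - 1) (SSWitness · n)
  have hnon := ZMod.ncard_not_sSWitness_le_card_eulerJacobiSubgroup n
  have hcard := ZMod.two_mul_card_le_sub_one_of_ne_top h1 hE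
  omega
end

section
/- (Korselt's criterion, one direction) If n is a squarefree composite number such that p - 1 divides n - 1 for every prime p dividing n, then n is a Carmichael number: b^(n-1) ≡ 1 (mod n) for every b coprime to n. -/
/-- A Carmichael number. -/
def IsCarmichael (n : ℕ) : Prop :=
  1 < n ∧ ¬ n.Prime ∧ ∀ b : ℤ, IsCoprime b (n : ℤ) → b ^ (n - 1) ≡ 1 [ZMOD (n : ℤ)]

theorem stmt13 (n : ℕ) (h1 : 1 < n) (hcomp : ¬ n.Prime) (hsf : Squarefree n)
    (hdvd : ∀ p : ℕ, p.Prime → p ∣ n → (p - 1) ∣ (n - 1)) : IsCarmichael n := by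
  refine ⟨h1, hcomp, fun b hb => ?_⟩
  have key : (n : ℤ) ∣ b ^ (n - 1) - 1 := by
    rw [Int.natCast_dvd]
    have hprod : ∏ p ∈ n.primeFactors, p = n := Nat.prod_primeFactors_of_squarefree hsf
    conv_lhs => rw [← hprod]
    apply Finset.prod_primes_dvd
    · intro p hp; exact (Nat.prime_of_mem_primeFactors hp).prime
    · intro p hp
      have hpp := Nat.prime_of_mem_primeFactors hp
      have hpn := Nat.dvd_of_mem_primeFactors hp
      haveI : Fact p.Prime := ⟨hpp⟩
      obtain ⟨k, hk⟩ := hdvd p hpp hpn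
      have hbz : (b : ZMod p) ≠ 0 := by
        rw [Ne, ZMod.intCast_zmod_eq_zero_iff_dvd]
        intro hdb
        have hu : IsUnit ((p : ℤ)) :=
          hb.isUnit_of_dvd' hdb (Int.natCast_dvd_natCast.mpr hpn)
        rw [Int.isUnit_iff] at hu
        have := hpp.two_le; omega
      have hfer := ZMod.pow_card_sub_one_eq_one hbz
      rw [← Int.natCast_dvd, ← ZMod.intCast_zmod_eq_zero_iff_dvd]
      push_cast
      rw [sub_eq_zero, hk, pow_mul, hfer, one_pow]
  have := Int.modEq_iff_dvd.mpr key
  exact this.symm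
end

section
/- (Korselt's criterion, other direction) If n is a Carmichael number, then n is squarefree and for every prime p dividing n, p - 1 divides n - 1. -/
lemma carmichael_units_pow (n : ℕ) (hn : IsCarmichael n) (u : (ZMod n)ˣ) :
    u ^ (n - 1) = 1 := by
  have hn1 : 1 < n := hn.1
  haveI : NeZero n := ⟨by omega⟩
  set b : ℤ := ((u : ZMod n).val : ℤ) with hb
  have hcop : IsCoprime b (n : ℤ) := by
    rw [hb, Nat.isCoprime_iff_coprime]
    exact ZMod.val_coe_unit_coprime u
  have h := hn.2.2 b hcop
  have h2 : ((b ^ (n - 1) : ℤ) : ZMod n) = ((1 : ℤ) : ZMod n) :=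
    (ZMod.intCast_eq_intCast_iff _ _ _).mpr h
  push_cast at h2
  have hbu : ((b : ℤ) : ZMod n) = (u : ZMod n) := by
    rw [hb]; push_cast; simp [ZMod.natCast_val, ZMod.cast_id]
  rw [hbu] at h2
  ext
  push_cast
  exact h2

theorem stmt14 (n : ℕ) (hn : IsCarmichael n) :
    Squarefree n ∧ ∀ p : ℕ, p.Prime → p ∣ n → (p - 1) ∣ (n - 1) := by
  have hn1 : 1 < n := hn.1
  haveI : NeZero n := ⟨by omega⟩
  constructor
  · rw [Nat.squarefree_iff_prime_squarefree]
    rintro p hp ⟨m, hm⟩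
    haveI : Fact p.Prime := ⟨hp⟩
    have hdvd : p ^ 2 ∣ n := ⟨m, by rw [hm]; ring⟩
    haveI : NeZero (p ^ 2) := ⟨pow_ne_zero 2 hp.pos.ne'⟩
    have hcard : Fintype.card (ZMod (p ^ 2))ˣ = p * (p - 1) := by
      rw [ZMod.card_units_eq_totient, Nat.totient_prime_pow hp (by norm_num)]
      simp
    have hpdvd : p ∣ Fintype.card (ZMod (p ^ 2))ˣ := by
      rw [hcard]; exact Dvd.intro _ rfl
    obtain ⟨x, hx⟩ := exists_prime_orderOf_dvd_card p hpdvd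
    obtain ⟨u, hu⟩ := ZMod.unitsMap_surjective hdvd x
    have hx1 : x ^ (n - 1) = 1 := by
      rw [← hu, ← map_pow, carmichael_units_pow n hn, map_one]
    have hord : p ∣ n - 1 := by
      rw [← hx]; exact orderOf_dvd_of_pow_eq_one hx1
    have hpn : p ∣ n := dvd_trans (dvd_pow_self p (by norm_num)) hdvd
    have h1 : p ∣ n - (n - 1) := Nat.dvd_sub hpn hord
    have : n - (n - 1) = 1 := by omega
    rw [this] at h1
    exact hp.one_lt.ne' (Nat.eq_one_of_dvd_one h1)
  · intro p hp hpn
    haveI : Fact p.Prime := ⟨hp⟩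
    haveI : NeZero p := ⟨hp.pos.ne'⟩
    obtain ⟨g, hg⟩ := IsCyclic.exists_generator (α := (ZMod p)ˣ)
    obtain ⟨u, hu⟩ := ZMod.unitsMap_surjective hpn g
    have hg1 : g ^ (n - 1) = 1 := by
      rw [← hu, ← map_pow, carmichael_units_pow n hn, map_one]
    have : orderOf g = p - 1 := by
      rw [orderOf_eq_card_of_forall_mem_zpowers hg, Nat.card_eq_fintype_card, ZMod.card_units_eq_totient, Nat.totient_prime hp]
    rw [← this]
    exact orderOf_dvd_of_pow_eq_one hg1
end

section
/- For every c ≥ 1 and every length n, if a binary string x of length n satisfies K_U(x) ≥ n - c for a fixed universal machine U (i.e., x is c-incompressible), then the number of 0s in x, N_0(x), satisfies |N_0(x)/n - 1/2| = O(sqrt((c + log n)/n)); in particular, the fraction of strings of length n whose number of zeros deviates from n/2 by more than n^(2/3) and which are c-incompressible tends to 0 as n → ∞, because all strings with such deviation are compressible: any string x of length n with |N_0(x) - n/2| > n^(2/3) satisfies K_U(x) ≤ n - Ω(n^(1/3)) + O(log n). -/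
/-
Listing the strings of length `n` with `j` zeros by a fixed computable enumeration, a string `x`
is determined by `(n, j)`, which costs `O(log n)` bits, and its index among `C(n, j)` strings.
The Chernoff bound `C(n, j) ≤ 2ⁿ exp (-2 (j - n/2)² / n)`, obtained from
`C(n, j) e^{2sj} ≤ (1 + e^{2s})ⁿ` and `cosh s ≤ exp (s² / 2)`, therefore gives
`K(x) ≤ n - (2 / ln 2) (j - n/2)² / n + O(log n)`. Against `K(x) ≥ n - c` this bounds the deviation
by `O(√(n (c + log n)))`, and a deviation above `n^(2/3)` saves `Ω(n^(1/3))` bits, which eventually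
exceeds any fixed `c`.
-/

/-- Kolmogorov complexity of `x` relative to the machine (partial function) `M`. -/
noncomputable def KC (M : List Bool →. List Bool) (x : List Bool) : ℕ∞ :=
  sInf ((fun s : List Bool => (s.length : ℕ∞)) '' {s | x ∈ M s})

section ChernoffBound

open Real

lemma choose_mul_pow_le_one_add_pow {R : Type*} [CommSemiring R] [PartialOrder R]
    [IsOrderedRing R] (n j : ℕ) {a : R} (ha : 0 ≤ a) : (n.choose j : R) * a ^ j ≤ (1 + a) ^ n := by
  rcases le_or_gt j n with hj | hj
  · rw [add_comm, add_pow]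
    simp only [one_pow, mul_one]
    calc (n.choose j : R) * a ^ j = a ^ j * n.choose j := mul_comm _ _
      _ ≤ ∑ m ∈ Finset.range (n + 1), a ^ m * n.choose m :=
        Finset.single_le_sum (fun m _ => mul_nonneg (pow_nonneg ha m) (Nat.cast_nonneg _))
          (Finset.mem_range.2 (Nat.lt_succ_of_le hj))
  · rw [Nat.choose_eq_zero_of_lt hj, Nat.cast_zero, zero_mul]
    exact pow_nonneg (add_nonneg zero_le_one ha) n

lemma choose_le_two_pow_mul_exp' (n j : ℕ) (s : ℝ) :
    (n.choose j : ℝ) ≤ 2 ^ n * exp (s * (n - 2 * j) + n * s ^ 2 / 2) := by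
  have hbin := choose_mul_pow_le_one_add_pow n j (exp_pos (2 * s)).le
  have hcosh : 1 + exp (2 * s) = 2 * exp s * cosh s := by
    rw [cosh_eq, two_mul s, exp_add, exp_neg]
    field_simp
    ring
  have hpow : (1 + exp (2 * s)) ^ n ≤ 2 ^ n * exp (n * s + n * s ^ 2 / 2) := by
    calc (1 + exp (2 * s)) ^ n ≤ (2 * exp (s + s ^ 2 / 2)) ^ n := by
          rw [hcosh, exp_add, ← mul_assoc]
          gcongr
          exact cosh_le_exp_half_sq s
      _ = 2 ^ n * exp (n * s + n * s ^ 2 / 2) := by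
          rw [mul_pow, ← exp_nat_mul]; ring_nf
  rw [← exp_nat_mul, ← le_div_iff₀ (exp_pos _)] at hbin
  calc (n.choose j : ℝ) ≤ (1 + exp (2 * s)) ^ n / exp (j * (2 * s)) := hbin
    _ ≤ 2 ^ n * exp (n * s + n * s ^ 2 / 2) / exp (j * (2 * s)) := by gcongr
    _ = 2 ^ n * exp (s * (n - 2 * j) + n * s ^ 2 / 2) := by
        rw [mul_div_assoc, ← exp_sub]; ring_nf

lemma choose_le_two_pow_mul_exp (n j : ℕ) :
    (n.choose j : ℝ) ≤ 2 ^ n * exp (-2 * (j - n / 2) ^ 2 / n) := by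
  -- `s = (2j - n) / n` minimises the exponent
  convert choose_le_two_pow_mul_exp' n j ((2 * j - n) / n) using 3
  rcases eq_or_ne (n : ℝ) 0 with hn | hn
  · simp [hn]
  · field_simp
    ring

end ChernoffBound

namespace Incompressible

open Real Primrec

def ofBits (l : List Bool) : ℕ := l.foldr Nat.bit 0

@[simp] lemma ofBits_bits (n : ℕ) : ofBits n.bits = n := by
  induction n using Nat.binaryRec' with
  | zero => simp [ofBits]
  | bit b n h ih => rw [Nat.bits_append_bit _ _ h]; simp_all [ofBits]

lemma two_pow_size_le (n : ℕ) : 2 ^ n.size ≤ 2 * n + 1 := by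
  rcases n.eq_zero_or_pos with rfl | hn
  · simp
  · have := Nat.lt_size.1 (Nat.sub_lt (Nat.size_pos.2 hn) one_pos)
    have h : 2 ^ n.size = 2 * 2 ^ (n.size - 1) := by
      rw [← pow_succ', Nat.sub_add_cancel (Nat.size_pos.2 hn)]
    omega

lemma ofBits_primrec : Primrec ofBits := by
  have hbit : Primrec₂ Nat.bit := by
    unfold Nat.bit
    exact Primrec.cond fst (Primrec.nat_add.comp (Primrec.nat_mul.comp (const 2) snd) (const 1))
      (Primrec.nat_mul.comp (const 2) snd)
  exact (list_foldr Primrec.id (const 0) (hbit.comp (fst.comp snd) (snd.comp snd)).to₂).of_eq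
    fun _ => rfl

def binaryStrings (n : ℕ) : List (List Bool) :=
  Nat.rec [[]] (fun _ L => L.map (false :: ·) ++ L.map (true :: ·)) n

@[simp] lemma binaryStrings_zero : binaryStrings 0 = [[]] := rfl

@[simp] lemma binaryStrings_succ (n : ℕ) :
    binaryStrings (n + 1) =
      (binaryStrings n).map (false :: ·) ++ (binaryStrings n).map (true :: ·) :=
  rfl

@[simp] lemma mem_binaryStrings {n : ℕ} {l : List Bool} : l ∈ binaryStrings n ↔ l.length = n := by
  induction n generalizing l with
  | zero => simp
  | succ n ih =>
    rcases l with _ | ⟨b, l⟩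
    · simp
    · cases b <;> simp [ih]

lemma countP_binaryStrings (n j : ℕ) :
    (binaryStrings n).countP (fun l => l.count false = j) = n.choose j := by
  induction n generalizing j with
  | zero => cases j <;> simp
  | succ n ih =>
    cases j <;>
      simp [List.countP_append, List.countP_map, Function.comp_def, ih, Nat.choose_succ_succ']

lemma binaryStrings_primrec : Primrec binaryStrings :=
  nat_rec₁ _ <| list_append.comp (list_map snd (list_cons.comp (const false) snd).to₂)
    (list_map snd (list_cons.comp (const true) snd).to₂)

def stringsWithZeros (n j : ℕ) : List (List Bool) :=
  (binaryStrings n).filter (fun l => l.count false = j)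

lemma mem_stringsWithZeros {n j : ℕ} {l : List Bool} :
    l ∈ stringsWithZeros n j ↔ l.length = n ∧ l.count false = j := by
  simp [stringsWithZeros]

lemma length_stringsWithZeros (n j : ℕ) : (stringsWithZeros n j).length = n.choose j := by
  rw [stringsWithZeros, ← List.countP_eq_length_filter, countP_binaryStrings]

lemma count_false_primrec : Primrec (List.count false) :=
  (list_length.comp <| listFilter (p := (· = false)) <|
    Primrec.eq.comp Primrec.id (const false)).of_eq fun l => by simp [List.count_eq_length_filter]

lemma stringsWithZeros_primrec : Primrec₂ stringsWithZeros := by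
  have hR : PrimrecRel fun (l : List Bool) (j : ℕ) => l.count false = j :=
    Primrec.eq.comp (count_false_primrec.comp fst) snd
  exact (PrimrecRel.listFilter hR).comp (binaryStrings_primrec.comp fst) snd

/-- `1ᵏ0`, then the `k` bits of `⟨n, j⟩`, then the bits of `i`: the unary prefix makes the code
self-delimiting, at the cost of `O(log n)` bits. -/
def describe (n j i : ℕ) : List Bool :=
  List.replicate (Nat.pair n j).size true ++ false :: ((Nat.pair n j).bits ++ i.bits)

def decode (s : List Bool) : List Bool :=
  let k := s.idxOf false
  let N := ofBits ((s.drop (k + 1)).take k)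
  (stringsWithZeros N.unpair.1 N.unpair.2).getD (ofBits (s.drop (2 * k + 1))) []

lemma decode_describe (n j i : ℕ) : decode (describe n j i) = (stringsWithZeros n j).getD i [] := by
  set k := (Nat.pair n j).size
  have hk : (describe n j i).idxOf false = k := by
    simp [describe, List.idxOf_append_of_notMem, k]
  have hdrop : (describe n j i).drop (k + 1) = (Nat.pair n j).bits ++ i.bits := by
    rw [describe, ← List.singleton_append, ← List.append_assoc]
    exact List.drop_left' (by simp [k])
  have hlen : (Nat.pair n j).bits.length = k := Nat.size_eq_bits_len _
  have hdrop' : (describe n j i).drop (2 * k + 1) = i.bits := by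
    rw [show 2 * k + 1 = (k + 1) + k by ring, ← List.drop_drop, hdrop, List.drop_left' hlen]
  simp only [decode, hk, hdrop, hdrop', List.take_left' hlen, ofBits_bits, Nat.unpair_pair]

lemma decode_primrec : Primrec decode := by
  have hk : Primrec fun s : List Bool => s.idxOf false := list_idxOf.comp (const false) Primrec.id
  have hN : Primrec fun s : List Bool =>
      ofBits ((s.drop (s.idxOf false + 1)).take (s.idxOf false)) :=
    ofBits_primrec.comp <| list_take.comp hk <| list_drop.comp (succ.comp hk) Primrec.id
  exact (list_getD []).comp (stringsWithZeros_primrec.comp (fst.comp (unpair.comp hN))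
    (snd.comp (unpair.comp hN))) <| ofBits_primrec.comp <|
      list_drop.comp (succ.comp (nat_mul.comp (const 2) hk)) Primrec.id

lemma decode_partrec : Partrec (decode : List Bool →. List Bool) :=
  decode_primrec.to_comp

lemma length_describe (n j i : ℕ) :
    (describe n j i).length = 2 * (Nat.pair n j).size + 1 + i.size := by
  simp [describe, Nat.size_eq_bits_len]
  ring

lemma two_pow_length_describe_le {n j : ℕ} (hj : j ≤ n) (i : ℕ) :
    2 ^ (describe n j i).length ≤ 16 * (n + 1) ^ 4 * (i + 1) := by
  have hP : 2 ^ (Nat.pair n j).size ≤ 2 * (n + 1) ^ 2 := by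
    have := Nat.pair_lt_max_add_one_sq n j
    rw [max_eq_left hj] at this
    linarith [two_pow_size_le (Nat.pair n j)]
  have hi := two_pow_size_le i
  calc 2 ^ (describe n j i).length = 2 * (2 ^ (Nat.pair n j).size) ^ 2 * 2 ^ i.size := by
        rw [length_describe]; ring
    _ ≤ 2 * (2 * (n + 1) ^ 2) ^ 2 * (2 * (i + 1)) := by gcongr; omega
    _ = 16 * (n + 1) ^ 4 * (i + 1) := by ring

lemma KC_le_length {M : List Bool →. List Bool} {x s : List Bool} (h : x ∈ M s) :
    KC M x ≤ s.length :=
  sInf_le ⟨s, h, rfl⟩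

lemma exists_KC_decode_le (x : List Bool) : ∃ L : ℕ, KC decode x ≤ L ∧
    2 ^ L ≤ 16 * (x.length + 1) ^ 4 * x.length.choose (x.count false) := by
  obtain ⟨i, hi, hxi⟩ := List.mem_iff_getElem.1
    (mem_stringsWithZeros.2 ⟨rfl, rfl⟩ : x ∈ stringsWithZeros x.length (x.count false))
  refine ⟨(describe x.length (x.count false) i).length, KC_le_length ?_, ?_⟩
  · rw [PFun.coe_val, Part.mem_some_iff, decode_describe, List.getD_eq_getElem _ _ hi, hxi]
  · rw [length_stringsWithZeros] at hi
    exact (two_pow_length_describe_le List.count_le_length i).trans (by gcongr; omega)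

variable {U : List Bool →. List Bool} {d : ℕ}

lemma exists_KC_le_sub_sq_deviation (hd : ∀ x, KC U x ≤ KC decode x + d) (x : List Bool) :
    ∃ L : ℕ, KC U x ≤ L ∧ (L : ℝ) * log 2 + 2 * (x.count false - x.length / 2 : ℝ) ^ 2 / x.length
      ≤ (x.length + d + 4) * log 2 + 4 * log (x.length + 1) := by
  obtain ⟨L, hL, hpow⟩ := exists_KC_decode_le x
  refine ⟨L + d, (hd x).trans (by push_cast; gcongr), ?_⟩
  set n := x.length
  set e := -2 * ((x.count false : ℝ) - n / 2) ^ 2 / n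
  have hreal : (2 : ℝ) ^ L ≤ 2 ^ 4 * (n + 1) ^ 4 * 2 ^ n * exp e := by
    calc (2 : ℝ) ^ L ≤ 16 * (n + 1) ^ 4 * n.choose (x.count false) := by exact_mod_cast hpow
      _ ≤ 16 * (n + 1) ^ 4 * (2 ^ n * exp e) := by gcongr; exact choose_le_two_pow_mul_exp _ _
      _ = _ := by ring
  have hlog := log_le_log (by positivity) hreal
  rw [log_mul (by positivity) (by positivity), log_mul (by positivity) (by positivity),
    log_mul (by positivity) (by positivity), log_exp, log_pow, log_pow, log_pow, log_pow] at hlog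
  simp only [e, neg_mul, neg_div] at hlog
  push_cast
  linarith

lemma cast_sub_le_of_tsub_le {n c L : ℕ} (h : ((n - c : ℕ) : ℕ∞) ≤ L) : (n : ℝ) - c ≤ L := by
  have h' : n - c ≤ L := by exact_mod_cast h
  rw [sub_le_iff_le_add]
  exact_mod_cast (by omega : n ≤ L + c)

lemma abs_count_div_sub_half_le (hd : ∀ x, KC U x ≤ KC decode x + d) {c n : ℕ} (hc : 1 ≤ c)
    (hn : 1 ≤ n) {x : List Bool} (hx : x.length = n) (hK : ((n - c : ℕ) : ℕ∞) ≤ KC U x) :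
    |(x.count false : ℝ) / n - 1 / 2| ≤ √((d + 9) / 2) * √((c + log n) / n) := by
  obtain ⟨L, hL, hbound⟩ := exists_KC_le_sub_sq_deviation hd x
  subst hx
  set n := x.length
  set δ := (x.count false : ℝ) - n / 2
  have hn' : (1 : ℝ) ≤ n := by exact_mod_cast hn
  have hnpos : (0 : ℝ) < n := by linarith
  have hcL : (n : ℝ) - c ≤ L := cast_sub_le_of_tsub_le (hK.trans hL)
  have hlogn : 0 ≤ log n := log_nonneg (by exact_mod_cast hn)
  have hlog_succ : log (n + 1) ≤ log 2 + log n := by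
    rw [← log_mul two_ne_zero hnpos.ne']
    exact log_le_log (by positivity) (by linarith)
  have hlog2 : log 2 ≤ 1 := by linarith [log_two_lt_d9]
  have hc' : (1 : ℝ) ≤ c := by exact_mod_cast hc
  -- `log 2 ≤ 1` and `1 ≤ c` absorb the additive constants into `(d + 9) * c`
  have hδ : 2 * δ ^ 2 / n ≤ (d + 9) * (c + log n) := by
    have hlog2pos : 0 < log 2 := log_pos one_lt_two
    nlinarith [mul_le_mul_of_nonneg_right hcL hlog2pos.le]
  have hsq : (δ / n) ^ 2 ≤ (d + 9) / 2 * ((c + log n) / n) :=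
    calc (δ / n) ^ 2 = 2 * δ ^ 2 / n / (2 * n) := by field_simp
      _ ≤ (d + 9) * (c + log n) / (2 * n) := by gcongr
      _ = (d + 9) / 2 * ((c + log n) / n) := by field_simp
  rw [← sqrt_mul (by positivity), show (x.count false : ℝ) / n - 1 / 2 = δ / n by field_simp; ring]
  exact abs_le_sqrt hsq

lemma exists_KC_le_of_deviation (hd : ∀ x, KC U x ≤ KC decode x + d) {n : ℕ} (hn : 2 ≤ n)
    {x : List Bool} (hx : x.length = n)
    (hdev : (n : ℝ) ^ ((2 : ℝ) / 3) < |(x.count false : ℝ) - n / 2|) :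
    ∃ L : ℕ, KC U x ≤ L ∧ (L : ℝ) ≤ n - 2 * n ^ ((1 : ℝ) / 3) + (d + 12) / log 2 * log n := by
  obtain ⟨L, hL, hbound⟩ := exists_KC_le_sub_sq_deviation hd x
  refine ⟨L, hL, ?_⟩
  subst hx
  set n := x.length
  set δ := (x.count false : ℝ) - n / 2
  have hn' : (2 : ℝ) ≤ n := by exact_mod_cast hn
  have hnpos : (0 : ℝ) < n := by linarith
  have hcube : 2 * (n : ℝ) ^ ((1 : ℝ) / 3) ≤ 2 * δ ^ 2 / n := by
    have hsq : (n : ℝ) ^ ((2 : ℝ) / 3) * n ^ ((2 : ℝ) / 3) = n ^ ((1 : ℝ) / 3) * n := by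
      rw [← rpow_add hnpos, ← rpow_add_one hnpos.ne']
      norm_num
    rw [le_div_iff₀ hnpos, ← sq_abs δ]
    nlinarith [rpow_nonneg hnpos.le ((2 : ℝ) / 3)]
  have hlog2 : 0 < log 2 := log_pos one_lt_two
  have hlog2_le : log 2 ≤ 1 := by linarith [log_two_lt_d9]
  have hlogn : log 2 ≤ log n := log_le_log two_pos hn'
  have hlog_succ : log (n + 1) ≤ log 2 + log n := by
    rw [← log_mul two_ne_zero hnpos.ne']
    exact log_le_log (by positivity) (by linarith)
  have hd8 : (d + 8 : ℝ) * log 2 ≤ (d + 8) * log n := by gcongr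
  have hrpow : (n : ℝ) ^ ((1 : ℝ) / 3) * log 2 ≤ n ^ ((1 : ℝ) / 3) :=
    mul_le_of_le_one_right (rpow_nonneg hnpos.le _) hlog2_le
  rw [← mul_le_mul_iff_of_pos_right hlog2, add_mul,
    show (d + 12) / log 2 * log n * log 2 = (d + 12) * log n by field_simp]
  nlinarith

lemma eventually_add_mul_log_lt_rpow (a b : ℝ) {r : ℝ} (hr : 0 < r) :
    ∀ᶠ x : ℝ in Filter.atTop, a + b * log x < x ^ r := by
  have hlog := ((isLittleO_log_rpow_atTop hr).const_mul_left b).bound one_half_pos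
  filter_upwards [hlog, (tendsto_rpow_atTop hr).eventually_gt_atTop (2 * a),
    Filter.eventually_ge_atTop 0] with x hlogx hax hx
  rw [norm_eq_abs, norm_eq_abs, abs_of_nonneg (rpow_nonneg hx r)] at hlogx
  linarith [le_abs_self (b * log x)]

lemma eventually_deviating_incompressible_eq_empty (hd : ∀ x, KC U x ≤ KC decode x + d)
    (c : ℕ) : ∀ᶠ n : ℕ in Filter.atTop, {x : List Bool | x.length = n ∧
      |(x.count false : ℝ) - n / 2| > (n : ℝ) ^ ((2 : ℝ) / 3) ∧
      ((n - c : ℕ) : ℕ∞) ≤ KC U x} = ∅ := by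
  filter_upwards [Filter.eventually_ge_atTop 2, tendsto_natCast_atTop_atTop.eventually
    (eventually_add_mul_log_lt_rpow c ((d + 12) / log 2) (by norm_num : (0 : ℝ) < 1 / 3))]
    with n hn hlarge
  refine Set.eq_empty_of_forall_notMem fun x ⟨hx, hdev, hK⟩ => ?_
  obtain ⟨L, hL, hLn⟩ := exists_KC_le_of_deviation hd hn hx hdev
  have := cast_sub_le_of_tsub_le (hK.trans hL)
  linarith [rpow_nonneg (Nat.cast_nonneg n) ((1 : ℝ) / 3)]

end Incompressible

theorem stmt19_general (U : List Bool →. List Bool)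
    (huniv : ∀ M : List Bool →. List Bool, Partrec M →
      ∃ d : ℕ, ∀ x : List Bool, KC U x ≤ KC M x + (d : ℕ∞)) :
    -- c-incompressible strings have nearly equal numbers of 0s and 1s
    (∃ C : ℝ, 0 < C ∧ ∀ c : ℕ, 1 ≤ c → ∀ n : ℕ, 1 ≤ n → ∀ x : List Bool,
        x.length = n → ((n - c : ℕ) : ℕ∞) ≤ KC U x →
        |((x.count false : ℝ)) / n - 1 / 2| ≤ C * Real.sqrt ((c + Real.log n) / n)) ∧
    -- the fraction of strings of length `n` with deviation `> n^(2/3)` that are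
    -- c-incompressible tends to 0
    (∀ c : ℕ, Filter.Tendsto (fun n : ℕ =>
        (Set.ncard {x : List Bool | x.length = n ∧
            |((x.count false : ℝ)) - n / 2| > (n : ℝ) ^ ((2 : ℝ) / 3) ∧
            ((n - c : ℕ) : ℕ∞) ≤ KC U x} : ℝ) / 2 ^ n) Filter.atTop (nhds 0)) ∧
    -- strings with deviation `> n^(2/3)` are compressible: K_U(x) ≤ n - Ω(n^(1/3)) + O(log n)
    (∃ c₀ : ℝ, 0 < c₀ ∧ ∃ C' : ℝ, ∃ n₀ : ℕ, ∀ n : ℕ, n₀ ≤ n → ∀ x : List Bool,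
        x.length = n → |((x.count false : ℝ)) - n / 2| > (n : ℝ) ^ ((2 : ℝ) / 3) →
        KC U x ≤ ((⌊(n : ℝ) - c₀ * (n : ℝ) ^ ((1 : ℝ) / 3) + C' * Real.log n⌋₊ : ℕ) : ℕ∞)) := by
  obtain ⟨d, hd⟩ := huniv Incompressible.decode Incompressible.decode_partrec
  refine ⟨⟨√((d + 9) / 2), by positivity,
    fun c hc n hn x hx hK => Incompressible.abs_count_div_sub_half_le hd hc hn hx hK⟩, fun c => ?_,
    2, two_pos, (d + 12) / Real.log 2, 2, fun n hn x hx hdev => ?_⟩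
  · refine tendsto_const_nhds.congr' ?_
    filter_upwards [Incompressible.eventually_deviating_incompressible_eq_empty hd c] with n hn
    rw [hn, Set.ncard_empty, Nat.cast_zero, zero_div]
  · obtain ⟨L, hL, hLn⟩ := Incompressible.exists_KC_le_of_deviation hd hn hx hdev
    exact hL.trans (by exact_mod_cast Nat.le_floor hLn)

theorem stmt19 (U : List Bool →. List Bool) (hU : Partrec U)
    (huniv : ∀ M : List Bool →. List Bool, Partrec M →
      ∃ d : ℕ, ∀ x : List Bool, KC U x ≤ KC M x + (d : ℕ∞)) :
    -- c-incompressible strings have nearly equal numbers of 0s and 1s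
    (∃ C : ℝ, 0 < C ∧ ∀ c : ℕ, 1 ≤ c → ∀ n : ℕ, 1 ≤ n → ∀ x : List Bool,
        x.length = n → ((n - c : ℕ) : ℕ∞) ≤ KC U x →
        |((x.count false : ℝ)) / n - 1 / 2| ≤ C * Real.sqrt ((c + Real.log n) / n)) ∧
    -- the fraction of strings of length `n` with deviation `> n^(2/3)` that are
    -- c-incompressible tends to 0
    (∀ c : ℕ, Filter.Tendsto (fun n : ℕ =>
        (Set.ncard {x : List Bool | x.length = n ∧
            |((x.count false : ℝ)) - n / 2| > (n : ℝ) ^ ((2 : ℝ) / 3) ∧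
            ((n - c : ℕ) : ℕ∞) ≤ KC U x} : ℝ) / 2 ^ n) Filter.atTop (nhds 0)) ∧
    -- strings with deviation `> n^(2/3)` are compressible: K_U(x) ≤ n - Ω(n^(1/3)) + O(log n)
    (∃ c₀ : ℝ, 0 < c₀ ∧ ∃ C' : ℝ, ∃ n₀ : ℕ, ∀ n : ℕ, n₀ ≤ n → ∀ x : List Bool,
        x.length = n → |((x.count false : ℝ)) - n / 2| > (n : ℝ) ^ ((2 : ℝ) / 3) →
        KC U x ≤ ((⌊(n : ℝ) - c₀ * (n : ℝ) ^ ((1 : ℝ) / 3) + C' * Real.log n⌋₊ : ℕ) : ℕ∞)) :=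
  stmt19_general U huniv
end
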